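/- For any subset V of the nonnegative reals with 0 ∈ V, the function M_V defined by M_V(s,t) = t if s = ∞, M_V(s,t) = s if t = ∞, and M_V(s,t) = sup{v ∈ V : v ≤ s and v ≤ t} otherwise, is an m-scheme. Moreover, if U ⊆ V then M_U ≤ M_V pointwise. -/

import Mathlib

/-!
Away from `⊤`, `MV V s t = supBelow V (min s t)`, with `supBelow V s` the supremum of the elements
of `V` below `s`. Since `supBelow V` is monotone and lies below the identity, it absorbs itself
inside a minimum, `supBelow V (min a (supBelow V b)) = supBelow V (min a b)`, which turns both
bracketings of a triple product into `supBelow V (min r (min s t))`.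
-/

open ENNReal NNReal

def IsMScheme (M : ℝ≥0∞ → ℝ≥0∞ → ℝ≥0∞) : Prop :=
  (∀ s t, M s t = M t s) ∧
  (∀ s t v w, s ≤ v → t ≤ w → M s t ≤ M v w) ∧
  (∀ r s t, M r (M s t) = M (M r s) t) ∧
  (∀ s, M s ⊤ = s)

noncomputable def MV (V : Set ℝ≥0) (s t : ℝ≥0∞) : ℝ≥0∞ :=
  if s = ⊤ then t else if t = ⊤ then s
  else ⨆ (v : ℝ≥0) (_ : v ∈ V ∧ (v : ℝ≥0∞) ≤ s ∧ (v : ℝ≥0∞) ≤ t), (v : ℝ≥0∞)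

noncomputable def supBelow (V : Set ℝ≥0) (s : ℝ≥0∞) : ℝ≥0∞ :=
  ⨆ (v : ℝ≥0) (_ : v ∈ V ∧ (v : ℝ≥0∞) ≤ s), (v : ℝ≥0∞)

lemma supBelow_le (V : Set ℝ≥0) (s : ℝ≥0∞) : supBelow V s ≤ s :=
  iSup₂_le fun _ hv => hv.2

lemma le_supBelow {V : Set ℝ≥0} {v : ℝ≥0} {s : ℝ≥0∞} (hv : v ∈ V) (h : (v : ℝ≥0∞) ≤ s) :
    (v : ℝ≥0∞) ≤ supBelow V s :=
  le_iSup₂ (f := fun (v : ℝ≥0) (_ : v ∈ V ∧ (v : ℝ≥0∞) ≤ s) => (v : ℝ≥0∞)) v ⟨hv, h⟩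

lemma supBelow_mono {V : Set ℝ≥0} {s t : ℝ≥0∞} (h : s ≤ t) : supBelow V s ≤ supBelow V t :=
  iSup₂_le fun _ hv => le_supBelow hv.1 (hv.2.trans h)

lemma supBelow_mono_set {U V : Set ℝ≥0} (h : U ⊆ V) (s : ℝ≥0∞) : supBelow U s ≤ supBelow V s :=
  iSup₂_le fun _ hv => le_supBelow (h hv.1) hv.2

lemma supBelow_min_supBelow (V : Set ℝ≥0) (a b : ℝ≥0∞) :
    supBelow V (min a (supBelow V b)) = supBelow V (min a b) := by
  apply le_antisymm
  · exact supBelow_mono (min_le_min_left a (supBelow_le V b))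
  · refine iSup₂_le fun v hv => le_supBelow hv.1 (le_min ?_ ?_)
    · exact hv.2.trans (min_le_left _ _)
    · exact le_supBelow hv.1 (hv.2.trans (min_le_right _ _))

section MV

variable (V : Set ℝ≥0)

lemma MV_eq_supBelow {s t : ℝ≥0∞} (hs : s ≠ ⊤) (ht : t ≠ ⊤) :
    MV V s t = supBelow V (min s t) := by
  rw [MV, if_neg hs, if_neg ht]
  exact iSup_congr fun v => iSup_congr_Prop (by simp) (fun _ => rfl)

@[simp]
lemma MV_top_left (t : ℝ≥0∞) : MV V ⊤ t = t := by simp [MV]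

@[simp]
lemma MV_top_right (s : ℝ≥0∞) : MV V s ⊤ = s := by
  by_cases hs : s = ⊤ <;> simp [MV, hs]

lemma MV_comm (s t : ℝ≥0∞) : MV V s t = MV V t s := by
  by_cases hs : s = ⊤
  · simp [hs]
  by_cases ht : t = ⊤
  · simp [ht]
  rw [MV_eq_supBelow V hs ht, MV_eq_supBelow V ht hs, min_comm]

lemma MV_le_left (s t : ℝ≥0∞) : MV V s t ≤ s := by
  by_cases hs : s = ⊤
  · simp [hs]
  by_cases ht : t = ⊤
  · simp [ht]
  rw [MV_eq_supBelow V hs ht]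
  exact (supBelow_le V _).trans (min_le_left _ _)

lemma MV_le_right (s t : ℝ≥0∞) : MV V s t ≤ t :=
  MV_comm V s t ▸ MV_le_left V t s

lemma MV_ne_top {s t : ℝ≥0∞} (hs : s ≠ ⊤) : MV V s t ≠ ⊤ :=
  ne_top_of_le_ne_top hs (MV_le_left V s t)

lemma MV_mono {s t v w : ℝ≥0∞} (hsv : s ≤ v) (htw : t ≤ w) : MV V s t ≤ MV V v w := by
  by_cases hv : v = ⊤
  · simpa [hv] using (MV_le_right V s t).trans htw
  by_cases hw : w = ⊤
  · simpa [hw] using (MV_le_left V s t).trans hsv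
  have hs : s ≠ ⊤ := ne_top_of_le_ne_top hv hsv
  have ht : t ≠ ⊤ := ne_top_of_le_ne_top hw htw
  rw [MV_eq_supBelow V hs ht, MV_eq_supBelow V hv hw]
  exact supBelow_mono (min_le_min hsv htw)

lemma MV_assoc (r s t : ℝ≥0∞) : MV V r (MV V s t) = MV V (MV V r s) t := by
  by_cases hr : r = ⊤
  · simp [hr]
  by_cases ht : t = ⊤
  · simp [ht]
  by_cases hs : s = ⊤
  · simp [hs]
  rw [MV_eq_supBelow V hr (MV_ne_top V hs), MV_eq_supBelow V (MV_ne_top V hr) ht,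
    MV_eq_supBelow V hs ht, MV_eq_supBelow V hr hs, supBelow_min_supBelow,
    min_comm (supBelow V _) t, supBelow_min_supBelow, min_comm t, min_assoc]

theorem isMScheme_MV : IsMScheme (MV V) :=
  ⟨MV_comm V, fun _ _ _ _ => MV_mono V, MV_assoc V, MV_top_right V⟩

end MV

lemma MV_mono_set {U V : Set ℝ≥0} (hUV : U ⊆ V) (s t : ℝ≥0∞) : MV U s t ≤ MV V s t := by
  by_cases hs : s = ⊤
  · simp [hs]
  by_cases ht : t = ⊤
  · simp [ht]
  rw [MV_eq_supBelow U hs ht, MV_eq_supBelow V hs ht]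
  exact supBelow_mono_set hUV _

theorem stmt3 :
    (∀ V : Set ℝ≥0, (0 : ℝ≥0) ∈ V → IsMScheme (MV V)) ∧
    (∀ U V : Set ℝ≥0, U ⊆ V → ∀ s t : ℝ≥0∞, MV U s t ≤ MV V s t) :=
  ⟨fun V _ => isMScheme_MV V, fun _ _ => MV_mono_set⟩
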